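/- For every assemblée A of size (n,r) with block-ends b_1 > ... > b_r, read in canonical order: |lrs(ρ(A))| equals the number of entries x of A with x > b_1 such that x exceeds every entry to its left (left-to-right maxima of A greater than b_1), and |rls(ρ(A))| equals the number of entries x of A with x < b_r such that x is smaller than every entry to its left (left-to-right minima of A smaller than b_r). -/

import Mathlib

open Finset

/-- An assemblée (in canonical order) of size `(n, r)`, encoded as a permutation
`w` of `Fin n` (position `p` holds the value `(w p : ℕ) + 1 ∈ {1,…,n}`) together
with the set `E` of positions of the `r` block-ends: the last position is a
block-end, and the block-end values decrease from left to right. -/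
def IsAssemblee (n r : ℕ) (w : Equiv.Perm (Fin n)) (E : Finset (Fin n)) : Prop :=
  E.card = r ∧
  (∀ p : Fin n, (p : ℕ) = n - 1 → p ∈ E) ∧
  (∀ p ∈ E, ∀ q ∈ E, p < q → w q < w p)

instance (n r : ℕ) :
    DecidablePred fun x : Equiv.Perm (Fin n) × Finset (Fin n) => IsAssemblee n r x.1 x.2 :=
  fun _ => by unfold IsAssemblee; infer_instance

/-- The type of assemblées of size `(n, r)`, in canonical order. -/
def Assemblee (n r : ℕ) : Type :=
  {x : Equiv.Perm (Fin n) × Finset (Fin n) // IsAssemblee n r x.1 x.2}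

instance (n r : ℕ) : Fintype (Assemblee n r) := Subtype.fintype _

namespace Assemblee

variable {n r : ℕ}

/-- The value (an element of `{1,…,n}`) at position `p`. -/
def val (A : Assemblee n r) (p : Fin n) : ℕ := (A.1.1 p : ℕ) + 1

/-- The set of positions of the block-ends. -/
def ends (A : Assemblee n r) : Finset (Fin n) := A.1.2

/-- The set of values of the block-ends. -/
def blockEnds (A : Assemblee n r) : Finset ℕ := A.ends.image A.val

/-- The largest block-end `b₁`. -/
def b1 (A : Assemblee n r) : ℕ := WithBot.unbotD 0 A.blockEnds.max

/-- The smallest block-end `b_r`. -/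
def br (A : Assemblee n r) : ℕ := WithTop.untopD 0 A.blockEnds.min

/-- The left-right sequence of `A`: those values `x > b₁` such that every value
`y > x` occurs to the left of `x`. -/
def lrs (A : Assemblee n r) : Finset ℕ :=
  (univ.filter fun p : Fin n =>
      A.b1 < A.val p ∧ ∀ q : Fin n, A.val p < A.val q → q < p).image A.val

/-- The right-left sequence of `A`: those values `x < b_r` such that every value
`y` with `x < y < b_r` occurs to the right of `x`. -/
def rls (A : Assemblee n r) : Finset ℕ :=
  (univ.filter fun p : Fin n =>
      A.val p < A.br ∧ ∀ q : Fin n, A.val p < A.val q → A.val q < A.br → p < q).image A.val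

end Assemblee

namespace Assemblee

variable {n r : ℕ}

/-- Positions holding values greater than `b₁`. -/
def largeSet (A : Assemblee n r) : Finset (Fin n) :=
  univ.filter fun q => A.b1 < A.val q

/-- The order-reversing involution on the positions holding values greater
than `b₁` (the `i`-th such position from the left is sent to the `i`-th from
the right). -/
def largeMirror (A : Assemblee n r) (p : Fin n) (hp : p ∈ A.largeSet) : Fin n :=
  (A.largeSet.orderIsoOfFin rfl
    (Fin.rev ((A.largeSet.orderIsoOfFin rfl).symm ⟨p, hp⟩)) : Fin n)

/-- The sequence of values of `ρ(A)`: the subsequence `a₁,…,a_u` of values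
greater than `b₁` is reversed in place (`aᵢ ↦ a_{u-i+1}`), every value
`c < b_r` is replaced by `b_r - c`, and all other values are unchanged. -/
def rhoVal (A : Assemblee n r) (p : Fin n) : ℕ :=
  if hp : p ∈ A.largeSet then A.val (A.largeMirror p hp)
  else if A.val p < A.br then A.br - A.val p
  else A.val p

end Assemblee

/-!
On the entries larger than `b₁`, `ρ` reverses the subsequence in place, so (by injectivity of the
values) the left-right sequence of `ρ(A)`, which consists of the right-to-left maxima of that
subsequence, is the mirror image of the left-to-right maxima of `A` above `b₁`. On the entries
smaller than `b_r`, `ρ` is the order-reversing map `c ↦ b_r - c`, so position by position the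
right-left sequence of `ρ(A)` consists of the left-to-right minima of `A` below `b_r`. Since `ρ`
fixes the block-ends, `A` and `ρ(A)` have the same `b₁` and `b_r`.
-/

section RecordsOfInjective

variable {α β : Type*} [LinearOrder α] [LinearOrder β] {f : α → β}

theorem Function.Injective.forall_lt_imp_lt_iff (hf : Function.Injective f) (x : α) :
    (∀ y, f x < f y → x < y) ↔ ∀ y, y < x → f y < f x := by
  refine forall_congr' fun y => ?_
  rcases lt_trichotomy x y with h | rfl | h
  · simp [h, h.not_gt]
  · simp
  · simp only [h.not_gt, imp_false, not_lt, h, true_imp_iff]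
    exact ⟨fun hle => hle.lt_of_ne (hf.ne h.ne), le_of_lt⟩

theorem Function.Injective.forall_gt_imp_lt_iff (hf : Function.Injective f) (x : α) :
    (∀ y, f y < f x → x < y) ↔ ∀ y, y < x → f x < f y :=
  (OrderDual.toDual.injective.comp hf).forall_lt_imp_lt_iff x

end RecordsOfInjective

namespace Assemblee

variable {n r : ℕ} (A : Assemblee n r)

theorem val_injective : Function.Injective A.val :=
  fun _ _ h => A.1.1.injective (Fin.ext (Nat.add_right_cancel h))

theorem one_le_val (p : Fin n) : 1 ≤ A.val p := Nat.le_add_left 1 _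

theorem le_b1 {x : ℕ} (hx : x ∈ A.blockEnds) : x ≤ A.b1 := by
  obtain ⟨m, hm⟩ := Finset.max_of_mem hx
  rw [b1, hm]
  exact Finset.le_max_of_eq hx hm

theorem br_le {x : ℕ} (hx : x ∈ A.blockEnds) : A.br ≤ x := by
  obtain ⟨m, hm⟩ := Finset.min_of_mem hx
  rw [br, hm]
  exact Finset.min_le_of_eq hx hm

theorem br_le_b1 : A.br ≤ A.b1 := by
  rcases A.blockEnds.eq_empty_or_nonempty with h | ⟨x, hx⟩
  · simp [b1, br, h]
  · exact (A.br_le hx).trans (A.le_b1 hx)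

theorem mem_largeSet {p : Fin n} : p ∈ A.largeSet ↔ A.b1 < A.val p := by
  simp [largeSet]

def mirror (p : Fin n) : Fin n :=
  if hp : p ∈ A.largeSet then A.largeMirror p hp else p

theorem mirror_of_mem {p : Fin n} (hp : p ∈ A.largeSet) : A.mirror p = A.largeMirror p hp :=
  dif_pos hp

theorem mirror_mem_largeSet {p : Fin n} (hp : p ∈ A.largeSet) : A.mirror p ∈ A.largeSet := by
  rw [A.mirror_of_mem hp]
  exact Subtype.prop _

theorem mirror_involutive : Function.Involutive A.mirror := by
  intro p
  by_cases hp : p ∈ A.largeSet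
  · have hmp := A.mirror_mem_largeSet hp
    rw [A.mirror_of_mem hp] at hmp ⊢
    rw [A.mirror_of_mem hmp]
    simp only [largeMirror, Subtype.coe_eta, OrderIso.symm_apply_apply, Fin.rev_rev,
      OrderIso.apply_symm_apply]
  · simp [mirror, hp]

theorem mirror_mem_largeSet_iff {p : Fin n} : A.mirror p ∈ A.largeSet ↔ p ∈ A.largeSet :=
  ⟨fun h => A.mirror_involutive p ▸ A.mirror_mem_largeSet h, A.mirror_mem_largeSet⟩

theorem mirror_lt_mirror {p q : Fin n} (hp : p ∈ A.largeSet) (hq : q ∈ A.largeSet) :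
    A.mirror p < A.mirror q ↔ q < p := by
  simp [A.mirror_of_mem hp, A.mirror_of_mem hq, largeMirror]

theorem rhoVal_of_mem_largeSet {p : Fin n} (hp : p ∈ A.largeSet) :
    A.rhoVal p = A.val (A.mirror p) := by
  rw [rhoVal, dif_pos hp, A.mirror_of_mem hp]

theorem rhoVal_of_not_mem_largeSet {p : Fin n} (hp : p ∉ A.largeSet) :
    A.rhoVal p = if A.val p < A.br then A.br - A.val p else A.val p :=
  dif_neg hp

theorem rhoVal_of_lt_br {p : Fin n} (hp : A.val p < A.br) : A.rhoVal p = A.br - A.val p := by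
  have hpL : p ∉ A.largeSet := by
    rw [mem_largeSet]
    have := A.br_le_b1
    omega
  rw [A.rhoVal_of_not_mem_largeSet hpL, if_pos hp]

theorem rhoVal_of_mem_ends {p : Fin n} (hp : p ∈ A.ends) : A.rhoVal p = A.val p := by
  have hx : A.val p ∈ A.blockEnds := mem_image_of_mem _ hp
  have hpL : p ∉ A.largeSet := by
    rw [mem_largeSet]
    exact (A.le_b1 hx).not_gt
  rw [A.rhoVal_of_not_mem_largeSet hpL, if_neg (A.br_le hx).not_gt]

theorem b1_lt_rhoVal_iff (p : Fin n) : A.b1 < A.rhoVal p ↔ p ∈ A.largeSet := by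
  by_cases hp : p ∈ A.largeSet
  · rw [A.rhoVal_of_mem_largeSet hp, ← mem_largeSet, A.mirror_mem_largeSet_iff]
  · have hle : A.val p ≤ A.b1 := not_lt.1 ((A.mem_largeSet).not.1 hp)
    have := A.br_le_b1
    rw [A.rhoVal_of_not_mem_largeSet hp]
    split_ifs <;> exact iff_of_false (by omega) hp

theorem rhoVal_lt_br_iff (p : Fin n) : A.rhoVal p < A.br ↔ A.val p < A.br := by
  have := A.br_le_b1
  by_cases hp : p ∈ A.largeSet
  · have := (A.mem_largeSet).1 hp
    have := (A.mem_largeSet).1 (A.mirror_mem_largeSet hp)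
    rw [A.rhoVal_of_mem_largeSet hp]
    omega
  · have := A.one_le_val p
    rw [A.rhoVal_of_not_mem_largeSet hp]
    split_ifs <;> omega

theorem forall_rhoVal_lt_imp_iff {p : Fin n} (hp : p ∈ A.largeSet) :
    (∀ q, A.rhoVal p < A.rhoVal q → q < p) ↔
      ∀ q, q < A.mirror p → A.val q < A.val (A.mirror p) := by
  rw [← A.val_injective.forall_lt_imp_lt_iff, A.rhoVal_of_mem_largeSet hp]
  have hmp := A.mirror_mem_largeSet hp
  constructor
  · intro h q hq
    have hqL : q ∈ A.largeSet := (A.mem_largeSet).2 (((A.mem_largeSet).1 hmp).trans hq)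
    have hmq := A.mirror_mem_largeSet hqL
    rw [← A.mirror_involutive q, A.mirror_lt_mirror hp hmq]
    exact h _ (by rwa [A.rhoVal_of_mem_largeSet hmq, A.mirror_involutive])
  · intro h q hq
    have hqL : q ∈ A.largeSet := (A.b1_lt_rhoVal_iff q).1 (((A.mem_largeSet).1 hmp).trans hq)
    rw [A.rhoVal_of_mem_largeSet hqL] at hq
    exact (A.mirror_lt_mirror hp hqL).1 (h _ hq)

theorem card_lrs_rhoVal :
    (univ.filter fun p : Fin n =>
        A.b1 < A.rhoVal p ∧ ∀ q : Fin n, A.rhoVal p < A.rhoVal q → q < p).card =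
      (univ.filter fun p : Fin n =>
        A.b1 < A.val p ∧ ∀ q : Fin n, q < p → A.val q < A.val p).card := by
  refine card_equiv A.mirror_involutive.toPerm fun p => ?_
  simp only [mem_filter, mem_univ, true_and, Function.Involutive.coe_toPerm, b1_lt_rhoVal_iff,
    ← mem_largeSet, mirror_mem_largeSet_iff]
  exact and_congr_right A.forall_rhoVal_lt_imp_iff

theorem forall_rhoVal_lt_imp_rhoVal_lt_br_imp_iff {p : Fin n} (hp : A.val p < A.br) :
    (∀ q, A.rhoVal p < A.rhoVal q → A.rhoVal q < A.br → p < q) ↔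
      ∀ q, q < p → A.val p < A.val q := by
  rw [← A.val_injective.forall_gt_imp_lt_iff]
  refine forall_congr' fun q => ?_
  rw [rhoVal_lt_br_iff, A.rhoVal_of_lt_br hp]
  by_cases hq : A.val q < A.br
  · have := A.one_le_val p
    rw [A.rhoVal_of_lt_br hq]
    exact ⟨fun h h' => h (by omega) hq, fun h h' _ => h (by omega)⟩
  · constructor <;> intro h h' <;> omega

theorem card_rls_rhoVal :
    (univ.filter fun p : Fin n =>
        A.rhoVal p < A.br ∧
          ∀ q : Fin n, A.rhoVal p < A.rhoVal q → A.rhoVal q < A.br → p < q).card =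
      (univ.filter fun p : Fin n =>
        A.val p < A.br ∧ ∀ q : Fin n, q < p → A.val p < A.val q).card := by
  congr 1
  refine filter_congr fun p _ => ?_
  rw [rhoVal_lt_br_iff]
  exact and_congr_right A.forall_rhoVal_lt_imp_rhoVal_lt_br_imp_iff

theorem blockEnds_eq_of_rho {B : Assemblee n r} (hends : B.ends = A.ends)
    (hval : B.val = A.rhoVal) : B.blockEnds = A.blockEnds := by
  rw [blockEnds, blockEnds, hends, hval]
  exact image_congr fun p hp => A.rhoVal_of_mem_ends hp

end Assemblee

/-- For every assemblée `A` of size `(n,r)` with block-ends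
`b₁ > … > b_r`, read in canonical order: `|lrs(ρ(A))|` equals the number of
entries `x > b₁` of `A` that exceed every entry to their left (left-to-right
maxima of `A` greater than `b₁`), and `|rls(ρ(A))|` equals the number of entries
`x < b_r` of `A` that are smaller than every entry to their left (left-to-right
minima of `A` smaller than `b_r`). -/
theorem lrs_rls_of_rho (n r : ℕ) (A B : Assemblee n r)
    (hends : B.ends = A.ends) (hval : B.val = A.rhoVal) :
    B.lrs.card =
      (Finset.univ.filter fun p : Fin n =>
        A.b1 < A.val p ∧ ∀ q : Fin n, q < p → A.val q < A.val p).card ∧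
    B.rls.card =
      (Finset.univ.filter fun p : Fin n =>
        A.val p < A.br ∧ ∀ q : Fin n, q < p → A.val p < A.val q).card := by
  have hblockEnds := A.blockEnds_eq_of_rho hends hval
  have hb1 : B.b1 = A.b1 := by rw [Assemblee.b1, Assemblee.b1, hblockEnds]
  have hbr : B.br = A.br := by rw [Assemblee.br, Assemblee.br, hblockEnds]
  rw [Assemblee.lrs, Assemblee.rls, card_image_of_injective _ B.val_injective,
    card_image_of_injective _ B.val_injective, hb1, hbr, hval]
  exact ⟨A.card_lrs_rhoVal, A.card_rls_rhoVal⟩
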